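/- Let G be a linearly ordered abelian group with finite spines which is not divisible (i.e., pG ≠ G for some prime p). Then there exists a prime p such that pG ≠ G and G is not p-antiregular; that is, either there is a convex subgroup H ⊊ G such that the quotient G/H is p-divisible (equivalently, G = H + pG), or there is a convex subgroup H ⊊ G such that the quotient G/H, linearly ordered by a + H < b + H iff a < b and b − a ∉ H, is archimedean (for all x, y ∈ G/H with 0 < x there is n ∈ ℕ with y < n·x). -/

import Mathlib

/-!
Fix a prime `p` with `pG ≠ G` and suppose no proper convex quotient of `G` is `p`-divisible.
By finiteness of the spine, some `H = H_p(a)` with `a ∉ pG` is maximal among the `H_p(b)`,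
`b ∉ pG`. If `G/H` were not archimedean, witnessed by `0 < x ∉ H` and `y` with `y + H`
above every `m • x + H`, then the convex subgroup `K` of elements bounded by multiples of `x`
would be proper and strictly contain `H`. As `G/K` is not `p`-divisible, there is `b ∉ K + pG`,
so `K ≤ H_p(b)`, and `H < H_p(b)` contradicts maximality.
-/

/-- `nH = {n • h : h ∈ H}` as a subgroup. -/
def smulSub {G : Type*} [AddCommGroup G] (n : ℕ) (H : AddSubgroup G) : AddSubgroup G :=
  AddSubgroup.map (n • AddMonoidHom.id G) H

/-- A subgroup `H` of a linearly ordered abelian group is convex if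
`0 ≤ g ≤ h` and `h ∈ H` imply `g ∈ H`. -/
def IsConvexSubgroup {G : Type*} [AddCommGroup G] [LinearOrder G] [IsOrderedAddMonoid G] (H : AddSubgroup G) : Prop :=
  ∀ g h : G, 0 ≤ g → g ≤ h → h ∈ H → g ∈ H

/-- `H_p(a)`: the largest convex subgroup `H` of `G` with `a ∉ H + pG` (equivalently the
union, i.e. supremum, of all such subgroups); it is the trivial subgroup when `a ∈ pG`. -/
def Hsub {G : Type*} [AddCommGroup G] [LinearOrder G] [IsOrderedAddMonoid G] (p : ℕ) (a : G) : AddSubgroup G :=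
  sSup {H : AddSubgroup G | IsConvexSubgroup H ∧ a ∉ H ⊔ smulSub p ⊤}

section ConvexSubgroup

variable {G : Type*} [AddCommGroup G] [LinearOrder G] [IsOrderedAddMonoid G]

namespace IsConvexSubgroup

variable {H K : AddSubgroup G}

lemma mem_of_abs_le (hH : IsConvexSubgroup H) {g h : G} (hgh : |g| ≤ |h|) (hh : h ∈ H) :
    g ∈ H :=
  abs_mem_iff.mp (hH _ _ (abs_nonneg g) hgh (abs_mem_iff.mpr hh))

lemma le_total (hH : IsConvexSubgroup H) (hK : IsConvexSubgroup K) : H ≤ K ∨ K ≤ H := by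
  refine or_iff_not_imp_left.mpr fun hHK k hk => ?_
  obtain ⟨h, hh, hhK⟩ := SetLike.not_le_iff_exists.mp hHK
  rcases _root_.le_total |k| |h| with hkh | hhk
  · exact hH.mem_of_abs_le hkh hh
  · exact absurd (hK.mem_of_abs_le hhk hk) hhK

lemma abs_lt_of_notMem (hH : IsConvexSubgroup H) {x h : G} (hx : 0 ≤ x) (hxH : x ∉ H)
    (hh : h ∈ H) : |h| < x :=
  lt_of_not_ge fun hxh => hxH (hH.mem_of_abs_le (by rwa [abs_of_nonneg hx]) hh)

end IsConvexSubgroup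

lemma isConvexSubgroup_bot : IsConvexSubgroup (⊥ : AddSubgroup G) := by
  intro g h hg hgh hh
  rw [AddSubgroup.mem_bot] at hh ⊢
  exact le_antisymm (hh ▸ hgh) hg

def archimedeanHull (x : G) : AddSubgroup G where
  carrier := {g | ∃ n : ℕ, |g| ≤ n • x}
  zero_mem' := ⟨0, by simp⟩
  add_mem' := by
    rintro g g' ⟨n, hn⟩ ⟨n', hn'⟩
    exact ⟨n + n', (abs_add_le g g').trans (add_nsmul x n n' ▸ add_le_add hn hn')⟩
  neg_mem' := by
    rintro g ⟨n, hn⟩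
    exact ⟨n, by rwa [abs_neg]⟩

lemma isConvexSubgroup_archimedeanHull (x : G) : IsConvexSubgroup (archimedeanHull x) := by
  rintro g h hg hgh ⟨n, hn⟩
  exact ⟨n, (abs_of_nonneg hg).symm ▸ hgh.trans ((le_abs_self h).trans hn)⟩

lemma mem_archimedeanHull_self {x : G} (hx : 0 ≤ x) : x ∈ archimedeanHull x :=
  ⟨1, by simp [abs_of_nonneg hx]⟩

lemma IsConvexSubgroup.le_archimedeanHull {H : AddSubgroup G} (hH : IsConvexSubgroup H)
    {x : G} (hx : 0 ≤ x) (hxH : x ∉ H) : H ≤ archimedeanHull x :=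
  fun h hh => ⟨1, by simpa using (hH.abs_lt_of_notMem hx hxH hh).le⟩

/-- If `|y| ≤ n • x`, then `(n + 2) • x - y` and `(n + 1) • x - y` both lie in `H`,
hence so does `x`. -/
lemma notMem_archimedeanHull {H : AddSubgroup G} {x y : G} (hx : 0 < x) (hxH : x ∉ H)
    (hy : ∀ m : ℕ, y < m • x → m • x - y ∈ H) : y ∉ archimedeanHull x := by
  rintro ⟨n, hn⟩
  have hlt : ∀ k, n < k → y < k • x := fun k hk =>
    ((le_abs_self y).trans hn).trans_lt (nsmul_lt_nsmul_left hx hk)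
  have hsub := H.sub_mem (hy (n + 2) (hlt _ (by omega))) (hy (n + 1) (hlt _ (by omega)))
  rw [show (n + 2) • x - y - ((n + 1) • x - y) = x by rw [succ_nsmul x (n + 1)]; abel] at hsub
  exact hxH hsub

section Hsub

variable {p : ℕ} {a : G}

lemma mem_Hsub_iff (ha : a ∉ smulSub p ⊤) {x : G} :
    x ∈ Hsub p a ↔ ∃ H : AddSubgroup G, (IsConvexSubgroup H ∧ a ∉ H ⊔ smulSub p ⊤) ∧ x ∈ H := by
  have hbot : (⊥ : AddSubgroup G) ∈ {H | IsConvexSubgroup H ∧ a ∉ H ⊔ smulSub p ⊤} :=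
    ⟨isConvexSubgroup_bot, by rwa [bot_sup_eq]⟩
  have hdir : DirectedOn (· ≤ ·) {H : AddSubgroup G | IsConvexSubgroup H ∧ a ∉ H ⊔ smulSub p ⊤} := by
    intro A hA B hB
    rcases hA.1.le_total hB.1 with hAB | hBA
    · exact ⟨B, hB, hAB, le_rfl⟩
    · exact ⟨A, hA, le_rfl, hBA⟩
  rw [Hsub, AddSubgroup.mem_sSup_of_directedOn ⟨⊥, hbot⟩ hdir]
  rfl

lemma isConvexSubgroup_Hsub (ha : a ∉ smulSub p ⊤) : IsConvexSubgroup (Hsub p a) := by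
  intro g h hg hgh hh
  obtain ⟨H, hH, hhH⟩ := (mem_Hsub_iff ha).mp hh
  exact (mem_Hsub_iff ha).mpr ⟨H, hH, hH.1 _ _ hg hgh hhH⟩

lemma notMem_Hsub_sup (ha : a ∉ smulSub p ⊤) : a ∉ Hsub p a ⊔ smulSub p ⊤ := by
  intro hmem
  obtain ⟨y, hy, z, hz, hyz⟩ := AddSubgroup.mem_sup.mp hmem
  obtain ⟨H, ⟨-, haH⟩, hyH⟩ := (mem_Hsub_iff ha).mp hy
  exact haH (AddSubgroup.mem_sup.mpr ⟨y, hyH, z, hz, hyz⟩)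

lemma Hsub_ne_top (ha : a ∉ smulSub p ⊤) : Hsub p a ≠ ⊤ := fun h =>
  notMem_Hsub_sup ha (AddSubgroup.mem_sup_left (h ▸ AddSubgroup.mem_top a))

lemma le_Hsub {K : AddSubgroup G} (hK : IsConvexSubgroup K) (ha : a ∉ K ⊔ smulSub p ⊤) :
    K ≤ Hsub p a :=
  le_sSup ⟨hK, ha⟩

theorem archimedean_of_maximalFor_Hsub
    (hdiv : ∀ K : AddSubgroup G, IsConvexSubgroup K → K ≠ ⊤ → K ⊔ smulSub p ⊤ ≠ ⊤)
    (ha : MaximalFor (· ∉ smulSub p ⊤) (Hsub p) a) (x y : G) (hx : 0 < x)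
    (hxH : x ∉ Hsub p a) : ∃ m : ℕ, y < m • x ∧ m • x - y ∉ Hsub p a := by
  by_contra! hy
  have hK := isConvexSubgroup_archimedeanHull x
  have hKtop : archimedeanHull x ≠ ⊤ := fun h =>
    notMem_archimedeanHull hx hxH hy (h ▸ AddSubgroup.mem_top y)
  obtain ⟨b, hb⟩ := SetLike.exists_not_mem_of_ne_top _ (hdiv _ hK hKtop)
  have hKb : archimedeanHull x ≤ Hsub p b := le_Hsub hK hb
  have hab : Hsub p a ≤ Hsub p b :=
    ((isConvexSubgroup_Hsub ha.1).le_archimedeanHull hx.le hxH).trans hKb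
  have hbp : b ∉ smulSub p ⊤ := fun h => hb (AddSubgroup.mem_sup_right h)
  exact hxH (ha.2 hbp hab (hKb (mem_archimedeanHull_self hx.le)))

end Hsub

end ConvexSubgroup

/-- Let `G` be a non-divisible linearly ordered abelian group with finite spines.  Then
there is a prime `p` with `pG ≠ G` such that `G` is not `p`-antiregular: either some
quotient `G/H` by a convex subgroup `H ⊊ G` is `p`-divisible (i.e. `G = H + pG`), or some
quotient `G/H` by a convex subgroup `H ⊊ G` is archimedean (for all `x, y ∈ G/H` with
`0 < x` there is `m : ℕ` with `y < m • x`; positivity and strict inequality in `G/H` are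
expressed on representatives: `0 < x + H` iff `0 < x` and `x ∉ H`, and
`y + H < z + H` iff `y < z` and `z - y ∉ H`). -/
theorem exists_prime_not_antiregular {G : Type*} [AddCommGroup G] [LinearOrder G] [IsOrderedAddMonoid G]
    (hfs : ∀ q : ℕ, q.Prime → {H : AddSubgroup G | ∃ a : G, H = Hsub q a}.Finite)
    (hnd : ∃ q : ℕ, q.Prime ∧ smulSub q (⊤ : AddSubgroup G) ≠ ⊤) :
    ∃ p : ℕ, p.Prime ∧ smulSub p (⊤ : AddSubgroup G) ≠ ⊤ ∧
      ((∃ H : AddSubgroup G, IsConvexSubgroup H ∧ H ≠ ⊤ ∧ H ⊔ smulSub p ⊤ = ⊤) ∨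
        (∃ H : AddSubgroup G, IsConvexSubgroup H ∧ H ≠ ⊤ ∧
          ∀ x y : G, 0 < x → x ∉ H → ∃ m : ℕ, y < m • x ∧ m • x - y ∉ H)) := by
  obtain ⟨p, hp, hpG⟩ := hnd
  refine ⟨p, hp, hpG, or_iff_not_imp_left.mpr fun hdiv => ?_⟩
  push Not at hdiv
  obtain ⟨b, hb⟩ := SetLike.exists_not_mem_of_ne_top _ hpG
  have hspine : (Hsub p '' {a | a ∉ smulSub p ⊤}).Finite :=
    (hfs p hp).subset (by rintro _ ⟨a, -, rfl⟩; exact ⟨a, rfl⟩)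
  obtain ⟨a, ha⟩ := Set.Finite.exists_maximalFor' (Hsub p) _ hspine ⟨b, hb⟩
  exact ⟨Hsub p a, isConvexSubgroup_Hsub ha.1, Hsub_ne_top ha.1,
    archimedean_of_maximalFor_Hsub hdiv ha⟩
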